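/- In first passage percolation with passage times T, suppose that for k disjoint finite sets A₁,…,A_k the coexistence event occurs: each A_i infects infinitely many vertices v (i.e., for infinitely many v, T(A_i, v) < T(A_j, v) for all j ≠ i). Suppose moreover that for each i the infection is transmitted along finite geodesics, and every vertex of Z^d has finite degree. Then there exist k pairwise disjoint one-sided (semi-infinite) geodesics, the i-th starting in A_i. -/

import Mathlib

open scoped NNReal

/-- Two vertices of `ℤ^d` are adjacent iff their `ℓ¹`-distance is 1 (so every
vertex has finite degree `2d`). -/
def adjZ {d : ℕ} (u v : Fin d → ℤ) : Prop :=
  (∑ i, (u i - v i).natAbs) = 1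

/-- The passage time of a path (a list of vertices). -/
def pathTime {d : ℕ} (τ : (Fin d → ℤ) → (Fin d → ℤ) → ℝ≥0) :
    List (Fin d → ℤ) → ℝ≥0
  | [] => 0
  | [_] => 0
  | a :: b :: rest => τ a b + pathTime τ (b :: rest)

/-- `γ` is a lattice path from `u` to `v`. -/
def IsPathFrom {d : ℕ} (u v : Fin d → ℤ) (γ : List (Fin d → ℤ)) : Prop :=
  γ.head? = some u ∧ γ.getLast? = some v ∧ List.Chain' adjZ γ

/-- Point-to-point first passage time. -/
noncomputable def fpT {d : ℕ} (τ : (Fin d → ℤ) → (Fin d → ℤ) → ℝ≥0)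
    (u v : Fin d → ℤ) : ℝ≥0 :=
  ⨅ γ : {γ : List (Fin d → ℤ) // IsPathFrom u v γ}, pathTime τ γ.1

/-- `γ` is a lattice path from the set `A` to `v`. -/
def IsPathFromSet {d : ℕ} (A : Set (Fin d → ℤ)) (v : Fin d → ℤ)
    (γ : List (Fin d → ℤ)) : Prop :=
  ∃ u ∈ A, IsPathFrom u v γ

/-- First passage time from a set `A` to a vertex `v`. -/
noncomputable def fpTSet {d : ℕ} (τ : (Fin d → ℤ) → (Fin d → ℤ) → ℝ≥0)
    (A : Set (Fin d → ℤ)) (v : Fin d → ℤ) : ℝ≥0 :=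
  ⨅ γ : {γ : List (Fin d → ℤ) // IsPathFromSet A v γ}, pathTime τ γ.1

/-- The set of vertices infected by species `i` (strictly closer in passage time
to `A i` than to every other `A j`). -/
noncomputable def infectedBy {d k : ℕ} (τ : (Fin d → ℤ) → (Fin d → ℤ) → ℝ≥0)
    (A : Fin k → Set (Fin d → ℤ)) (i : Fin k) : Set (Fin d → ℤ) :=
  {v | ∀ j : Fin k, j ≠ i → fpTSet τ (A i) v < fpTSet τ (A j) v}

/-!
Each species infects infinitely many vertices, each along a finite geodesic that stays inside
the species' own territory. These geodesics form a finitely branching tree rooted in the finite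
set `A i` (a vertex of `ℤ^d` has finitely many neighbours) with infinitely many leaves, so by
Kőnig's lemma it has an infinite branch; every finite piece of the branch lies on a finite
geodesic, hence is itself a geodesic. Territories of different species are disjoint, and so are
the branches.
-/

/-- Kőnig's lemma for the tree of prefixes of members of `L`. -/
theorem Set.Infinite.exists_seq_forall_map_range_prefix {α : Type*} {L : Set (List α)}
    (hL : L.Infinite) (hnext : ∀ p : List α, {a | ∃ l ∈ L, p ++ [a] <+: l}.Finite) :
    ∃ f : ℕ → α, ∀ n, ∃ l ∈ L, (List.range n).map f <+: l := by
  have step : ∀ p : List α, {l ∈ L | p <+: l}.Infinite →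
      ∃ a, {l ∈ L | p ++ [a] <+: l}.Infinite := by
    intro p hp
    by_contra! hfin
    refine hp ((((hnext p).biUnion fun a _ => hfin a).insert p).subset ?_)
    rintro l ⟨hl, t, rfl⟩
    cases t with
    | nil => simp
    | cons a t => exact Or.inr (Set.mem_biUnion (x := a) ⟨_, hl, t, by simp⟩ ⟨hl, t, by simp⟩)
  let P : ℕ → {p : List α // {l ∈ L | p <+: l}.Infinite} :=
    Nat.rec ⟨[], by simpa using hL⟩
      fun _ p => ⟨p.1 ++ [(step p.1 p.2).choose], (step p.1 p.2).choose_spec⟩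
  let f : ℕ → α := fun n => (step (P n).1 (P n).2).choose
  have hP : ∀ n, (P n).1 = (List.range n).map f := by
    intro n
    induction n with
    | zero => rfl
    | succ n ih => rw [List.range_succ, List.map_append, ← ih]; rfl
  refine ⟨f, fun n => ?_⟩
  obtain ⟨l, hl, hpre⟩ := (P n).2.nonempty
  exact ⟨l, hl, hP n ▸ hpre⟩

section FirstPassage

variable {d : ℕ} {τ : (Fin d → ℤ) → (Fin d → ℤ) → ℝ≥0}

theorem setOf_adjZ_finite (u : Fin d → ℤ) : {w | adjZ u w}.Finite := by
  refine (Set.Finite.pi fun i => Set.finite_Icc (u i - 1) (u i + 1)).subset fun w hw i _ => ?_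
  have : (u i - w i).natAbs ≤ 1 :=
    (Finset.single_le_sum (fun j _ => Nat.zero_le _) (Finset.mem_univ i)).trans_eq hw
  exact ⟨by omega, by omega⟩

theorem finite_setOf_append_singleton_prefix {B : Set (Fin d → ℤ)} (hB : B.Finite)
    {L : Set (List (Fin d → ℤ))} (hL : ∀ l ∈ L, ∃ v, IsPathFromSet B v l)
    (p : List (Fin d → ℤ)) : {w | ∃ l ∈ L, p ++ [w] <+: l}.Finite := by
  refine (hB.union (p.finite_toSet.biUnion fun u _ => setOf_adjZ_finite u)).subset ?_
  rintro w ⟨l, hl, hpre⟩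
  obtain ⟨v, u, hu, hhead, -, hchain⟩ := hL l hl
  rcases List.eq_nil_or_concat p with rfl | ⟨p', a, rfl⟩
  · obtain ⟨t, rfl⟩ := hpre
    simp only [List.nil_append, List.singleton_append, List.head?_cons, Option.some.injEq] at hhead
    exact Or.inl (hhead ▸ hu)
  · have := hchain.prefix hpre
    simp only [List.concat_eq_append, List.isChain_append, List.getLast?_append, List.head?_cons,
      List.getLast?_singleton] at this
    exact Or.inr (Set.mem_biUnion (x := a) (by simp) (this.2.2 a rfl w rfl))

theorem pathTime_append_cons (l r : List (Fin d → ℤ)) (x : Fin d → ℤ) :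
    pathTime τ (l ++ x :: r) = pathTime τ (l ++ [x]) + pathTime τ (x :: r) := by
  induction l with
  | nil => simp [pathTime]
  | cons a l ih =>
    cases l with
    | nil => simp [pathTime]
    | cons b l =>
      simp only [List.cons_append, pathTime] at ih ⊢
      rw [ih, add_assoc]

theorem pathTime_append_append {p s q : List (Fin d → ℤ)} {x y : Fin d → ℤ}
    (hx : s.head? = some x) (hy : s.getLast? = some y) :
    pathTime τ (p ++ s ++ q) = pathTime τ (p ++ [x]) + pathTime τ s + pathTime τ (y :: q) := by
  obtain ⟨s', rfl⟩ := List.head?_eq_some_iff.mp hx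
  obtain ⟨s₀, hs₀⟩ := List.getLast?_eq_some_iff.mp hy
  calc pathTime τ (p ++ x :: s' ++ q)
      = pathTime τ (p ++ [x]) + pathTime τ (s₀ ++ y :: q) := by
        rw [List.append_assoc, List.cons_append, pathTime_append_cons p (s' ++ q) x,
          ← List.cons_append, hs₀, List.append_assoc, List.singleton_append]
    _ = _ := by rw [pathTime_append_cons s₀ q y, ← hs₀, add_assoc]

theorem IsPathFrom.replace_infix {u v x y : Fin d → ℤ} {p s σ q : List (Fin d → ℤ)}
    (h : IsPathFrom u v (p ++ s ++ q)) (hs : IsPathFrom x y s) (hσ : IsPathFrom x y σ) :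
    IsPathFrom u v (p ++ σ ++ q) := by
  obtain ⟨hhead, hlast, hchain⟩ := h
  obtain ⟨hsx, hsy, hs⟩ := hs
  obtain ⟨hσx, hσy, hσ⟩ := hσ
  refine ⟨?_, ?_, ?_⟩
  · simpa [List.head?_append, hsx, hσx] using hhead
  · simpa [List.getLast?_append, hsy, hσy] using hlast
  · have hc : List.IsChain adjZ (p ++ s ++ q) := hchain
    have hs : List.IsChain adjZ s := hs
    have hσ : List.IsChain adjZ σ := hσ
    show List.IsChain adjZ (p ++ σ ++ q)
    simp_all [List.isChain_append, List.head?_append, List.getLast?_append]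

theorem fpT_le_pathTime {u v : Fin d → ℤ} {γ : List (Fin d → ℤ)} (h : IsPathFrom u v γ) :
    fpT τ u v ≤ pathTime τ γ :=
  ciInf_le (OrderBot.bddBelow _) (⟨γ, h⟩ : {γ // IsPathFrom u v γ})

theorem fpTSet_le_pathTime {A : Set (Fin d → ℤ)} {v : Fin d → ℤ} {γ : List (Fin d → ℤ)}
    (h : IsPathFromSet A v γ) : fpTSet τ A v ≤ pathTime τ γ :=
  ciInf_le (OrderBot.bddBelow _) (⟨γ, h⟩ : {γ // IsPathFromSet A v γ})

theorem fpTSet_eq_zero_of_mem {A : Set (Fin d → ℤ)} {v : Fin d → ℤ} (hv : v ∈ A) :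
    fpTSet τ A v = 0 :=
  nonpos_iff_eq_zero.mp (fpTSet_le_pathTime ⟨v, hv, rfl, rfl, List.isChain_singleton v⟩)

/-- Every piece of a geodesic from a set is a point-to-point geodesic: otherwise splicing in a
faster path between the endpoints of the piece would beat the first passage time. -/
theorem pathTime_eq_fpT_of_append_append {A : Set (Fin d → ℤ)} {z x y : Fin d → ℤ}
    {p s q : List (Fin d → ℤ)} (hl : IsPathFromSet A z (p ++ s ++ q))
    (hopt : pathTime τ (p ++ s ++ q) = fpTSet τ A z) (hs : IsPathFrom x y s) :
    pathTime τ s = fpT τ x y := by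
  refine le_antisymm ?_ (fpT_le_pathTime hs)
  by_contra! hlt
  have : Nonempty {γ // IsPathFrom x y γ} := ⟨⟨s, hs⟩⟩
  obtain ⟨⟨σ, hσ⟩, hσs⟩ := exists_lt_of_ciInf_lt hlt
  obtain ⟨u, hu, hpath⟩ := hl
  have hle := fpTSet_le_pathTime (τ := τ) ⟨u, hu, hpath.replace_infix hs hσ⟩
  rw [pathTime_append_append hs.1 hs.2.1] at hopt
  rw [pathTime_append_append hσ.1 hσ.2.1, ← hopt] at hle
  exact hle.not_gt (add_lt_add_left (add_lt_add_right hσs _) _)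

def IsOneSidedGeodesic (τ : (Fin d → ℤ) → (Fin d → ℤ) → ℝ≥0) (g : ℕ → Fin d → ℤ) : Prop :=
  (∀ n, adjZ (g n) (g (n + 1))) ∧
    ∀ m n, m < n →
      pathTime τ ((List.range (n - m + 1)).map fun t => g (m + t)) = fpT τ (g m) (g n)

theorem exists_isOneSidedGeodesic {B I : Set (Fin d → ℤ)} (hB : B.Finite) (hI : I.Infinite)
    (hgeo : ∀ v ∈ I, ∃ γ : List (Fin d → ℤ),
      IsPathFromSet B v γ ∧ pathTime τ γ = fpTSet τ B v ∧ ∀ w ∈ γ, w ∈ B ∪ I) :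
    ∃ g : ℕ → Fin d → ℤ, g 0 ∈ B ∧ IsOneSidedGeodesic τ g ∧ ∀ n, g n ∈ B ∪ I := by
  set L := {γ | ∃ v ∈ I,
    IsPathFromSet B v γ ∧ pathTime τ γ = fpTSet τ B v ∧ ∀ w ∈ γ, w ∈ B ∪ I}
  have hL : L.Infinite := by
    -- geodesics to distinct vertices of `I` are distinct, as they end there
    refine Set.Infinite.of_image List.getLast? ((hI.image (Option.some_injective _).injOn).mono ?_)
    rintro _ ⟨v, hv, rfl⟩
    obtain ⟨γ, hγ⟩ := hgeo v hv
    obtain ⟨-, -, -, hlast, -⟩ := hγ.1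
    exact ⟨γ, ⟨v, hv, hγ⟩, hlast⟩
  obtain ⟨g, hg⟩ := hL.exists_seq_forall_map_range_prefix
    (finite_setOf_append_singleton_prefix hB fun l ⟨v, _, hl, _⟩ => ⟨v, hl⟩)
  have hsplit : ∀ m n, m ≤ n → ∃ l ∈ L, ∃ q,
      l = (List.range m).map g ++ (List.range (n - m + 1)).map (fun t => g (m + t)) ++ q := by
    intro m n hmn
    obtain ⟨l, hl, q, rfl⟩ := hg (n + 1)
    refine ⟨_, hl, q, ?_⟩
    rw [show n + 1 = m + (n - m + 1) by omega, List.range_add, List.map_append, List.map_map]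
    rfl
  have hpath : ∀ m n, m ≤ n →
      IsPathFrom (g m) (g n) ((List.range (n - m + 1)).map fun t => g (m + t)) := by
    intro m n hmn
    obtain ⟨l, ⟨v, -, ⟨u, -, -, -, hchain⟩, -⟩, q, rfl⟩ := hsplit m n hmn
    refine ⟨by simp [List.head?_range], ?_, hchain.infix ⟨_, q, rfl⟩⟩
    simp [List.getLast?_range, show m + (n - m) = n by omega]
  refine ⟨g, ?_, ⟨fun n => ?_, fun m n hmn => ?_⟩, fun n => ?_⟩
  · obtain ⟨l, ⟨v, -, ⟨u, hu, hhead, -⟩, -⟩, q, rfl⟩ := hsplit 0 0 le_rfl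
    simp at hhead
    exact hhead ▸ hu
  · have h : List.IsChain adjZ _ := (hpath n (n + 1) (by omega)).2.2
    simpa [List.range_succ] using h
  · obtain ⟨l, ⟨v, -, hl, hopt, -⟩, q, rfl⟩ := hsplit m n hmn.le
    exact pathTime_eq_fpT_of_append_append hl hopt (hpath m n hmn.le)
  · obtain ⟨l, ⟨v, -, -, -, hmem⟩, q, rfl⟩ := hsplit n n le_rfl
    exact hmem _ (by simp)

theorem disjoint_union_infectedBy {k : ℕ} {A : Fin k → Set (Fin d → ℤ)}
    (hdisj : ∀ i j, i ≠ j → Disjoint (A i) (A j)) {i j : Fin k} (hij : i ≠ j) :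
    Disjoint (A i ∪ infectedBy τ A i) (A j ∪ infectedBy τ A j) := by
  rw [Set.disjoint_left]
  rintro x (hxi | hxi) (hxj | hxj)
  · exact Set.disjoint_left.mp (hdisj i j hij) hxi hxj
  · exact not_lt_zero (fpTSet_eq_zero_of_mem hxi ▸ hxj i hij)
  · exact not_lt_zero (fpTSet_eq_zero_of_mem hxj ▸ hxi j hij.symm)
  · exact lt_asymm (hxi j hij.symm) (hxj i hij)

end FirstPassage

theorem coexistence_implies_disjoint_geodesics_general {d k : ℕ}
    (τ : (Fin d → ℤ) → (Fin d → ℤ) → ℝ≥0)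
    (A : Fin k → Set (Fin d → ℤ))
    (hfin : ∀ i, (A i).Finite)
    (hdisj : ∀ i j, i ≠ j → Disjoint (A i) (A j))
    (hcoex : ∀ i, (infectedBy τ A i).Infinite)
    (hgeo : ∀ i, ∀ v ∈ infectedBy τ A i, ∃ γ : List (Fin d → ℤ),
      IsPathFromSet (A i) v γ ∧ pathTime τ γ = fpTSet τ (A i) v ∧
      ∀ w ∈ γ, w ∈ A i ∪ infectedBy τ A i) :
    ∃ g : Fin k → ℕ → (Fin d → ℤ),
      (∀ i, g i 0 ∈ A i) ∧
      (∀ i n, adjZ (g i n) (g i (n + 1))) ∧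
      (∀ i m n, m < n →
        pathTime τ ((List.range (n - m + 1)).map fun t => g i (m + t)) =
          fpT τ (g i m) (g i n)) ∧
      (∀ i j, i ≠ j → Disjoint (Set.range (g i)) (Set.range (g j))) := by
  choose g hg₀ hgeod hmem using fun i => exists_isOneSidedGeodesic (hfin i) (hcoex i) (hgeo i)
  refine ⟨g, hg₀, fun i => (hgeod i).1, fun i => (hgeod i).2, fun i j hij => ?_⟩
  exact (disjoint_union_infectedBy hdisj hij).mono
    (Set.range_subset_iff.mpr (hmem i)) (Set.range_subset_iff.mpr (hmem j))

/-- if coexistence of `k` species occurs (each species infects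
infinitely many vertices) and infection is transmitted along finite geodesics,
then there exist `k` pairwise disjoint one-sided (semi-infinite) geodesics, the
`i`-th starting in `A i`. -/
theorem coexistence_implies_disjoint_geodesics {d k : ℕ} (hd : 2 ≤ d)
    (τ : (Fin d → ℤ) → (Fin d → ℤ) → ℝ≥0)
    (hsymm : ∀ u v, τ u v = τ v u)
    (A : Fin k → Set (Fin d → ℤ))
    (hfin : ∀ i, (A i).Finite)
    (hne : ∀ i, (A i).Nonempty)
    (hdisj : ∀ i j, i ≠ j → Disjoint (A i) (A j))
    (hcoex : ∀ i, (infectedBy τ A i).Infinite)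
    (hgeo : ∀ i, ∀ v ∈ infectedBy τ A i, ∃ γ : List (Fin d → ℤ),
      IsPathFromSet (A i) v γ ∧ pathTime τ γ = fpTSet τ (A i) v ∧
      ∀ w ∈ γ, w ∈ A i ∪ infectedBy τ A i) :
    ∃ g : Fin k → ℕ → (Fin d → ℤ),
      (∀ i, g i 0 ∈ A i) ∧
      (∀ i n, adjZ (g i n) (g i (n + 1))) ∧
      (∀ i m n, m < n →
        pathTime τ ((List.range (n - m + 1)).map fun t => g i (m + t)) =
          fpT τ (g i m) (g i n)) ∧
      (∀ i j, i ≠ j → Disjoint (Set.range (g i)) (Set.range (g j))) :=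
  coexistence_implies_disjoint_geodesics_general τ A hfin hdisj hcoex hgeo
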